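/- arXiv:1310.7526 — 8 statements merged into one kernel-verified Lean document; each statement's English description precedes it below -/
import Mathlib

section
/- Let A_n be the free noncommutative unital Z-algebra on generators a_{ij} for 1 ≤ i ≠ j ≤ n, and let φ_{σ_k} be the algebra endomorphism defined by: a_{ij} ↦ a_{ij} for i,j ∉ {k,k+1}; a_{k+1,i} ↦ a_{ki} and a_{i,k+1} ↦ a_{ik} for i ∉ {k,k+1}; a_{k,k+1} ↦ −a_{k+1,k}; a_{k+1,k} ↦ −a_{k,k+1}; a_{ki} ↦ a_{k+1,i} − a_{k+1,k}a_{ki} and a_{ik} ↦ a_{i,k+1} − a_{ik}a_{k,k+1} for i ∉ {k,k+1}. Then φ_{σ_k} is an algebra automorphism of A_n, with inverse φ_{σ_k^{-1}} given by the analogous formulas: a_{ki} ↦ a_{k+1,i}, a_{ik} ↦ a_{i,k+1}, a_{k,k+1} ↦ −a_{k+1,k}, a_{k+1,k} ↦ −a_{k,k+1}, a_{k+1,i} ↦ a_{ki} − a_{k,k+1}a_{k+1,i}, a_{i,k+1} ↦ a_{ik} − a_{i,k+1}a_{k+1,k}. -/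
/-- Index set for the generators `a i j`, `i ≠ j`, of the free algebra `A_n`. -/
abbrev BraidAlgGen (n : ℕ) := {p : Fin n × Fin n // p.1 ≠ p.2}

/-- The free noncommutative unital `ℤ`-algebra on generators `a i j`, `i ≠ j`. -/
abbrev BraidAlg (n : ℕ) := FreeAlgebra ℤ (BraidAlgGen n)

/-- The generator `a i j` (for `i ≠ j`). -/
noncomputable def agen {n : ℕ} (i j : Fin n) (h : i ≠ j) : BraidAlg n :=
  FreeAlgebra.ι ℤ ⟨(i, j), h⟩

/-- Values of `φ_{σ_k}` on generators, where `k, k1` play the role of `k, k+1`: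
`a_{k,k1} ↦ -a_{k1,k}`, `a_{k1,k} ↦ -a_{k,k1}`, `a_{k,i} ↦ a_{k1,i} - a_{k1,k} a_{k,i}`,
`a_{i,k} ↦ a_{i,k1} - a_{i,k} a_{k,k1}`, `a_{k1,i} ↦ a_{k,i}`, `a_{i,k1} ↦ a_{i,k}`,
and `a_{i,j} ↦ a_{i,j}` for `i, j ∉ {k, k1}`. -/
noncomputable def phiSigmaAux {n : ℕ} (k k1 : Fin n) (hk : k ≠ k1)
    (p : BraidAlgGen n) : BraidAlg n :=
  if h1 : p.1.1 = k ∧ p.1.2 = k1 then -agen k1 k hk.symm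
  else if h2 : p.1.1 = k1 ∧ p.1.2 = k then -agen k k1 hk
  else if h3 : p.1.1 = k then
    agen k1 p.1.2 (fun he => h1 ⟨h3, he.symm⟩) -
      agen k1 k hk.symm * agen k p.1.2 (fun he => p.2 (h3.trans he))
  else if h4 : p.1.2 = k then
    agen p.1.1 k1 (fun he => h2 ⟨he, h4⟩) -
      agen p.1.1 k (fun he => p.2 (he.trans h4.symm)) * agen k k1 hk
  else if h5 : p.1.1 = k1 then agen k p.1.2 (fun he => h2 ⟨h5, he.symm⟩)
  else if h6 : p.1.2 = k1 then agen p.1.1 k (fun he => h1 ⟨he, h6⟩)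
  else FreeAlgebra.ι ℤ p

/-- The algebra endomorphism `φ_{σ_k}` of `A_n` (with `k1` playing the role of `k+1`). -/
noncomputable def phiSigma {n : ℕ} (k k1 : Fin n) (hk : k ≠ k1) :
    BraidAlg n →ₐ[ℤ] BraidAlg n :=
  FreeAlgebra.lift ℤ (phiSigmaAux k k1 hk)

/-- Values of `φ_{σ_k⁻¹}` on generators:
`a_{k,k1} ↦ -a_{k1,k}`, `a_{k1,k} ↦ -a_{k,k1}`, `a_{k,i} ↦ a_{k1,i}`,
`a_{i,k} ↦ a_{i,k1}`, `a_{k1,i} ↦ a_{k,i} - a_{k,k1} a_{k1,i}`,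
`a_{i,k1} ↦ a_{i,k} - a_{i,k1} a_{k1,k}`, and `a_{i,j} ↦ a_{i,j}` otherwise. -/
noncomputable def phiSigmaInvAux {n : ℕ} (k k1 : Fin n) (hk : k ≠ k1)
    (p : BraidAlgGen n) : BraidAlg n :=
  if h1 : p.1.1 = k ∧ p.1.2 = k1 then -agen k1 k hk.symm
  else if h2 : p.1.1 = k1 ∧ p.1.2 = k then -agen k k1 hk
  else if h3 : p.1.1 = k then agen k1 p.1.2 (fun he => h1 ⟨h3, he.symm⟩)
  else if h4 : p.1.2 = k then agen p.1.1 k1 (fun he => h2 ⟨he, h4⟩)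
  else if h5 : p.1.1 = k1 then
    agen k p.1.2 (fun he => h2 ⟨h5, he.symm⟩) -
      agen k k1 hk * agen k1 p.1.2 (fun he => p.2 (h5.trans he))
  else if h6 : p.1.2 = k1 then
    agen p.1.1 k (fun he => h1 ⟨he, h6⟩) -
      agen p.1.1 k1 (fun he => p.2 (he.trans h6.symm)) * agen k1 k hk.symm
  else FreeAlgebra.ι ℤ p

/-- The algebra endomorphism `φ_{σ_k⁻¹}` of `A_n`. -/
noncomputable def phiSigmaInv {n : ℕ} (k k1 : Fin n) (hk : k ≠ k1) :
    BraidAlg n →ₐ[ℤ] BraidAlg n :=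
  FreeAlgebra.lift ℤ (phiSigmaInvAux k k1 hk)

lemma ι_eq_agen {n : ℕ} (p : BraidAlgGen n) :
    FreeAlgebra.ι ℤ p = agen p.1.1 p.1.2 p.2 := rfl

lemma phiSigma_agen {n : ℕ} (k k1 : Fin n) (hk : k ≠ k1) (i j : Fin n) (h : i ≠ j) :
    phiSigma k k1 hk (agen i j h) = phiSigmaAux k k1 hk ⟨(i, j), h⟩ :=
  FreeAlgebra.lift_ι_apply _ _

lemma phiSigmaInv_agen {n : ℕ} (k k1 : Fin n) (hk : k ≠ k1) (i j : Fin n) (h : i ≠ j) :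
    phiSigmaInv k k1 hk (agen i j h) = phiSigmaInvAux k k1 hk ⟨(i, j), h⟩ :=
  FreeAlgebra.lift_ι_apply _ _

/-- `φ_{σ_k}` is an algebra automorphism of `A_n`, with inverse
`φ_{σ_k⁻¹}` given by the stated formulas. -/
theorem phiSigma_automorphism {n : ℕ} (k k1 : Fin n) (hk : k ≠ k1) :
    (phiSigma k k1 hk).comp (phiSigmaInv k k1 hk) = AlgHom.id ℤ (BraidAlg n) ∧
    (phiSigmaInv k k1 hk).comp (phiSigma k k1 hk) = AlgHom.id ℤ (BraidAlg n) := by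
  have key : ∀ p : BraidAlgGen n,
      (phiSigma k k1 hk) (phiSigmaInvAux k k1 hk p) = FreeAlgebra.ι ℤ p ∧
      (phiSigmaInv k k1 hk) (phiSigmaAux k k1 hk p) = FreeAlgebra.ι ℤ p := by
    rintro ⟨⟨i, j⟩, hij⟩
    rw [ι_eq_agen]
    simp only [phiSigmaAux, phiSigmaInvAux]
    by_cases h1 : i = k ∧ j = k1
    · obtain ⟨rfl, rfl⟩ := h1
      constructor <;>
        simp [phiSigma_agen, phiSigmaInv_agen, phiSigmaAux, phiSigmaInvAux, hk, hk.symm, hij]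
    by_cases h2 : i = k1 ∧ j = k
    · obtain ⟨rfl, rfl⟩ := h2
      constructor <;>
        simp [phiSigma_agen, phiSigmaInv_agen, phiSigmaAux, phiSigmaInvAux, hk, hk.symm,
          hij, h1]
    by_cases h3 : i = k
    · subst h3
      have hj1 : j ≠ k1 := fun hj => h1 ⟨rfl, hj⟩
      constructor <;>
        · simp [phiSigma_agen, phiSigmaInv_agen, phiSigmaAux, phiSigmaInvAux, hk, hk.symm,
            hij, hij.symm, h1, h2, hj1, hj1.symm]
          try noncomm_ring
    by_cases h4 : j = k
    · subst h4
      have hi1 : i ≠ k1 := fun hi => h2 ⟨hi, rfl⟩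
      constructor <;>
        · simp [phiSigma_agen, phiSigmaInv_agen, phiSigmaAux, phiSigmaInvAux, hk, hk.symm,
            hij, hij.symm, h1, h2, h3, hi1, hi1.symm]
          try noncomm_ring
    by_cases h5 : i = k1
    · subst h5
      constructor <;>
        · simp [phiSigma_agen, phiSigmaInv_agen, phiSigmaAux, phiSigmaInvAux, hk, hk.symm,
            hij, hij.symm, h1, h2, h3, h4]
          try noncomm_ring
    by_cases h6 : j = k1
    · subst h6
      constructor <;>
        · simp [phiSigma_agen, phiSigmaInv_agen, phiSigmaAux, phiSigmaInvAux, hk, hk.symm,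
            hij, hij.symm, h1, h2, h3, h4, h5]
          try noncomm_ring
    · constructor <;>
        simp [phiSigma_agen, phiSigmaInv_agen, phiSigmaAux, phiSigmaInvAux, ι_eq_agen,
          hk, hk.symm, hij, h1, h2, h3, h4, h5, h6]
  constructor
  · apply FreeAlgebra.hom_ext
    funext p
    simpa [phiSigma, phiSigmaInv, FreeAlgebra.lift_ι_apply] using (key p).1
  · apply FreeAlgebra.hom_ext
    funext p
    simpa [phiSigma, phiSigmaInv, FreeAlgebra.lift_ι_apply] using (key p).2
end

section
/- Define polynomials P_k ∈ Z[x] over the complex numbers by P_0 = 1, P_1(x) = −x, P_{k+1}(x) = P_{k−1}(x) − x·P_k(−x). For every u ≥ 2 there exists x_0 ∈ C with P_{u−1}(x_0) = 0; moreover for any such x_0 one has P_u(x_0) = P_{u−2}(x_0) and P_u(x_0)·P_{u−2}(−x_0) = (−1)^u, hence P_{u−2}(−x_0) ∈ {1, −1}. -/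
open Polynomial

/-- The sequence of polynomials `P_k` over `ℂ` with `P 0 = 1`, `P 1 = -x`,
and `P (k+2) (x) = P k (x) - x * P (k+1) (-x)`. -/
noncomputable def cornwellPC : ℕ → Polynomial ℂ
  | 0 => 1
  | 1 => -X
  | (k + 2) => cornwellPC k - X * (cornwellPC (k + 1)).comp (-X)

lemma cornwellPC_parity : ∀ k, (cornwellPC k).comp (-X) = C ((-1:ℂ)^k) * cornwellPC k
  | 0 => by simp [cornwellPC]
  | 1 => by simp [cornwellPC]
  | (k+2) => by
    have h1 := cornwellPC_parity (k+1)
    have h0 := cornwellPC_parity k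
    have hC : C ((-1:ℂ)^k) * C ((-1:ℂ)^k) = 1 := by
      rw [← C_mul, ← pow_add]
      exact congrArg C (Even.neg_one_pow ⟨k, rfl⟩) |>.trans C_1
    show (cornwellPC k - X * (cornwellPC (k + 1)).comp (-X)).comp (-X) = _
    rw [sub_comp, mul_comp, X_comp, comp_assoc, neg_comp, X_comp, neg_neg, comp_X, h0]
    show _ = C ((-1:ℂ)^(k+2)) * (cornwellPC k - X * (cornwellPC (k + 1)).comp (-X))
    rw [h1]
    simp only [pow_succ, C_mul, C_neg, C_1]
    linear_combination (-(X * cornwellPC (k+1))) * hC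

lemma cornwellPC_eval_rec (k : ℕ) (x : ℂ) :
    (cornwellPC (k+2)).eval x = (cornwellPC k).eval x - x * (cornwellPC (k+1)).eval (-x) := by
  show (cornwellPC k - X * (cornwellPC (k + 1)).comp (-X)).eval x = _
  simp [eval_comp]

lemma cornwellPC_eval_neg (k : ℕ) (x : ℂ) :
    (cornwellPC k).eval (-x) = (-1)^k * (cornwellPC k).eval x := by
  have := congrArg (eval x) (cornwellPC_parity k)
  simpa [eval_comp] using this

lemma cornwellPC_natDegree_le : ∀ k, (cornwellPC k).natDegree ≤ k
  | 0 => by simp [cornwellPC]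
  | 1 => by simp [cornwellPC]
  | (k+2) => by
    have h1 := cornwellPC_natDegree_le (k+1)
    have h0 := cornwellPC_natDegree_le k
    show (cornwellPC k - X * (cornwellPC (k + 1)).comp (-X)).natDegree ≤ k + 2
    refine le_trans (natDegree_sub_le _ _) (max_le (h0.trans (by omega)) ?_)
    refine le_trans (natDegree_mul_le) ?_
    have hc : ((cornwellPC (k+1)).comp (-X)).natDegree ≤ k + 1 := by
      refine le_trans (natDegree_comp_le) ?_
      have : (-X : Polynomial ℂ).natDegree = 1 := by simp
      rw [this, mul_one]; exact h1
    have hx : (X : Polynomial ℂ).natDegree = 1 := natDegree_X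
    omega

lemma cornwellPC_coeff_ne : ∀ k, (cornwellPC k).coeff k ≠ 0
  | 0 => by simp [cornwellPC]
  | 1 => by simp [cornwellPC]
  | (k+2) => by
    have h1 := cornwellPC_coeff_ne (k+1)
    rw [show cornwellPC (k+2) = cornwellPC k - X * (cornwellPC (k + 1)).comp (-X) from rfl,
      cornwellPC_parity (k+1)]
    have hk : (cornwellPC k).coeff (k+2) = 0 :=
      coeff_eq_zero_of_natDegree_lt (lt_of_le_of_lt (cornwellPC_natDegree_le k) (by omega))
    rw [coeff_sub, hk, mul_left_comm, coeff_C_mul, coeff_X_mul]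
    simp only [zero_sub, neg_ne_zero, mul_ne_zero_iff]
    exact ⟨pow_ne_zero _ (by norm_num), h1⟩

lemma cornwellPC_natDegree (k : ℕ) : (cornwellPC k).natDegree = k :=
  le_antisymm (cornwellPC_natDegree_le k) (le_natDegree_of_ne_zero (cornwellPC_coeff_ne k))

lemma cornwellPC_det : ∀ (k : ℕ) (x : ℂ),
    (cornwellPC (k+2)).eval x * (cornwellPC k).eval (-x)
      - (cornwellPC (k+1)).eval x * (cornwellPC (k+1)).eval (-x) = (-1)^k
  | 0, x => by
    rw [cornwellPC_eval_rec 0 x]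
    simp [cornwellPC]
  | (k+1), x => by
    have IH := cornwellPC_det k x
    show (cornwellPC (k+3)).eval x * (cornwellPC (k+1)).eval (-x)
      - (cornwellPC (k+2)).eval x * (cornwellPC (k+2)).eval (-x) = (-1)^(k+1)
    rw [cornwellPC_eval_rec (k+1) x, cornwellPC_eval_neg (k+2), cornwellPC_eval_rec k x,
      cornwellPC_eval_neg (k+1), cornwellPC_eval_neg k] at *
    rcases Nat.even_or_odd k with hk | hk
    · have h1 : (-1:ℂ)^k = 1 := hk.neg_one_pow
      have h2 : (-1:ℂ)^(k+1) = -1 := by rw [pow_succ, h1]; ring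
      have h3 : (-1:ℂ)^(k+2) = 1 := by rw [pow_succ, h2]; ring
      simp only [h1, h2, h3] at IH ⊢
      linear_combination -IH
    · have h1 : (-1:ℂ)^k = -1 := hk.neg_one_pow
      have h2 : (-1:ℂ)^(k+1) = 1 := by rw [pow_succ, h1]; ring
      have h3 : (-1:ℂ)^(k+2) = -1 := by rw [pow_succ, h2]; ring
      simp only [h1, h2, h3] at IH ⊢
      linear_combination -IH

/-- for every `u ≥ 2` there exists `x₀ ∈ ℂ` with `P_{u-1}(x₀) = 0`;
moreover for any such `x₀` one has `P_u(x₀) = P_{u-2}(x₀)`,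
`P_u(x₀) · P_{u-2}(-x₀) = (-1)^u`, and hence `P_{u-2}(-x₀) ∈ {1, -1}`. -/
theorem cornwellPC_root_props (u : ℕ) (hu : 2 ≤ u) :
    (∃ x₀ : ℂ, (cornwellPC (u - 1)).eval x₀ = 0) ∧
    ∀ x₀ : ℂ, (cornwellPC (u - 1)).eval x₀ = 0 →
      (cornwellPC u).eval x₀ = (cornwellPC (u - 2)).eval x₀ ∧
      (cornwellPC u).eval x₀ * (cornwellPC (u - 2)).eval (-x₀) = (-1) ^ u ∧
      ((cornwellPC (u - 2)).eval (-x₀) = 1 ∨ (cornwellPC (u - 2)).eval (-x₀) = -1) := by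
  obtain ⟨v, rfl⟩ : ∃ v, u = v + 2 := ⟨u - 2, by omega⟩
  have e1 : v + 2 - 1 = v + 1 := rfl
  have e2 : v + 2 - 2 = v := rfl
  rw [e1, e2]
  constructor
  · have hd : 0 < (cornwellPC (v+1)).degree := by
      rw [← natDegree_pos_iff_degree_pos, cornwellPC_natDegree]
      omega
    obtain ⟨z, hz⟩ := Complex.exists_root hd
    exact ⟨z, hz⟩
  · intro x₀ h
    have hneg : (cornwellPC (v+1)).eval (-x₀) = 0 := by
      rw [cornwellPC_eval_neg, h, mul_zero]
    have hrec : (cornwellPC (v+2)).eval x₀ = (cornwellPC v).eval x₀ := by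
      rw [cornwellPC_eval_rec, hneg, mul_zero, sub_zero]
    refine ⟨hrec, ?_, ?_⟩
    · have hdet := cornwellPC_det v x₀
      rw [h, hneg, mul_zero, sub_zero] at hdet
      rw [hdet, pow_add]
      norm_num
    · have hdet := cornwellPC_det v x₀
      rw [h, hneg, mul_zero, sub_zero, hrec] at hdet
      have hn := cornwellPC_eval_neg v x₀
      set a := (cornwellPC v).eval x₀
      set t := (cornwellPC v).eval (-x₀)
      have hs : ((-1:ℂ)^v) * ((-1:ℂ)^v) = 1 := by
        rw [← mul_pow]; norm_num
      have ht : t ^ 2 = 1 := by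
        calc t ^ 2 = ((-1:ℂ)^v * a) * t := by rw [← hn]; ring
        _ = (-1:ℂ)^v * (a * t) := by ring
        _ = 1 := by rw [hdet, hs]
      have hfac : (t - 1) * (t + 1) = 0 := by linear_combination ht
      rcases mul_eq_zero.mp hfac with h' | h'
      · exact Or.inl (by linear_combination h')
      · exact Or.inr (by linear_combination h')
end

section
/- Let S be a ring with unity, V a right S-module, G a group, m ∈ G, and ρ : G → Aut_S(V) a group homomorphism. Suppose V is generated by elements e_1, …, e_r with ρ(m)e_1 = e_1·μ_0 and ρ(m)e_i = e_i for 2 ≤ i ≤ r, where μ_0 ∈ S and 1 − μ_0 is invertible. If Ann_S(e_1) = {0}, then the 'first coordinate' function is well defined: whenever Σ_{k=1}^r e_k b_k = Σ_{k=1}^r e_k c_k with b_k, c_k ∈ S, one has b_1 = c_1. -/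
open MulOpposite

/-- let `S` be a ring with unity, `V` a right `S`-module (a module over
`Sᵐᵒᵖ`), `G` a group, `m ∈ G`, and `ρ : G → Aut_S(V)` a homomorphism.  Suppose `V`
is generated by `e 0, …, e (r-1)`, with `ρ(m) (e 0) = (e 0)·μ₀`, `ρ(m) (e i) = e i`
for `i ≠ 0`, where `1 - μ₀` is invertible, and `Ann_S (e 0) = 0`.  Then the first
coordinate is well defined: if `Σ (e k)·(b k) = Σ (e k)·(c k)` then `b 0 = c 0`. -/
theorem first_coordinate_well_defined {S : Type*} [Ring S]
    {V : Type*} [AddCommGroup V] [Module Sᵐᵒᵖ V]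
    {G : Type*} [Group G] (ρ : G →* (V ≃ₗ[Sᵐᵒᵖ] V)) (m : G)
    {r : ℕ} (e : Fin r → V)
    (hgen : Submodule.span Sᵐᵒᵖ (Set.range e) = ⊤)
    (hr : 0 < r) (μ₀ : S) (hμ : IsUnit (1 - μ₀))
    (he0 : ρ m (e ⟨0, hr⟩) = op μ₀ • e ⟨0, hr⟩)
    (hei : ∀ i, i ≠ ⟨0, hr⟩ → ρ m (e i) = e i)
    (hann : ∀ s : S, op s • e ⟨0, hr⟩ = 0 → s = 0) :
    ∀ b c : Fin r → S,
      (∑ k, op (b k) • e k) = (∑ k, op (c k) • e k) → b ⟨0, hr⟩ = c ⟨0, hr⟩ := by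
  intro b c h
  set d : Fin r → S := fun k => b k - c k with hd
  have hx : (∑ k, op (d k) • e k) = 0 := by
    have : (∑ k, op (d k) • e k) = (∑ k, op (b k) • e k) - (∑ k, op (c k) • e k) := by
      rw [← Finset.sum_sub_distrib]
      refine Finset.sum_congr rfl fun k _ => ?_
      simp [hd, sub_smul]
    rw [this, h, sub_self]
  have hρ : (∑ k, op (d k) • (ρ m) (e k)) = 0 := by
    have h1 : (∑ k, op (d k) • (ρ m) (e k)) = (ρ m) (∑ k, op (d k) • e k) := by
      rw [map_sum]
      exact Finset.sum_congr rfl fun k _ => (map_smul _ _ _).symm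
    rw [h1, hx, map_zero]
  have key : op ((μ₀ - 1) * d ⟨0, hr⟩) • e ⟨0, hr⟩ = 0 := by
    have h2 : (∑ k, op (d k) • (ρ m) (e k)) - (∑ k, op (d k) • e k)
        = op ((μ₀ - 1) * d ⟨0, hr⟩) • e ⟨0, hr⟩ := by
      rw [← Finset.sum_sub_distrib]
      rw [Finset.sum_eq_single (⟨0, hr⟩ : Fin r)]
      · rw [he0, smul_smul, ← sub_smul]
        congr 1
        simp [mul_sub, sub_mul]
      · intro i _ hi
        rw [hei i hi, sub_self]
      · intro habs; exact absurd (Finset.mem_univ _) habs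
    rw [hρ, hx, sub_zero] at h2
    exact h2.symm
  have hd0 : (μ₀ - 1) * d ⟨0, hr⟩ = 0 := hann _ key
  have hu : IsUnit (μ₀ - 1) := by
    have := hμ.neg
    simpa [neg_sub] using this
  have : d ⟨0, hr⟩ = 0 := by
    obtain ⟨u, hu⟩ := hu
    have := congrArg (fun x => (↑u⁻¹ : S) * x) hd0
    simpa [← hu, ← mul_assoc] using this
  simpa [hd, sub_eq_zero] using this
end

section
/- Let F be a field, G a group generated by the conjugates {γ_i^{-1} m γ_i : 1 ≤ i ≤ r} of a fixed element m (with γ_1 = identity), and ρ : G → GL(V) a KCH representation: ρ(m) is diagonalizable with eigenvalue 1 of multiplicity dim V − 1 and remaining eigenvalue μ_0 ≠ 1, with eigenvector e_1 for μ_0. Set w_i = ρ(γ_i^{-1})e_1 and let W = span{w_1,…,w_r}. Then ρ(γ_i^{-1} m γ_i) w_i = μ_0 w_i for each i, and W is a ρ-invariant subspace of V. -/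
/-- let `G` be generated by the conjugates `g i = (γ i)⁻¹ * m * (γ i)`
(with `γ 0 = 1`), and let `ρ` be a KCH representation: there is an eigenbasis `b`
of `ρ(m)` with `ρ(m)(b 0) = μ₀ • b 0`, `μ₀ ≠ 1`, and `ρ(m)(b i) = b i` for `i ≠ 0`.
Set `w i = ρ((γ i)⁻¹)(b 0)` and let `W` be the span of the `w i`.  Then
`ρ(g i)(w i) = μ₀ • w i` for each `i`, and `W` is `ρ`-invariant. -/
theorem meridian_subspace_invariant {F : Type*} [Field F]
    {V : Type*} [AddCommGroup V] [Module F V]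
    {G : Type*} [Group G] (ρ : G →* (V ≃ₗ[F] V)) (m : G)
    {r : ℕ} (γ : Fin r → G) (hr : 0 < r) (hγ0 : γ ⟨0, hr⟩ = 1)
    (hgen : Subgroup.closure (Set.range fun i => (γ i)⁻¹ * m * γ i) = ⊤)
    {d : ℕ} (hd : 0 < d) (b : Module.Basis (Fin d) F V) (μ₀ : F) (hμ : μ₀ ≠ 1)
    (hb0 : ρ m (b ⟨0, hd⟩) = μ₀ • b ⟨0, hd⟩)
    (hbi : ∀ i, i ≠ ⟨0, hd⟩ → ρ m (b i) = b i) :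
    (∀ i : Fin r, ρ ((γ i)⁻¹ * m * γ i) (ρ (γ i)⁻¹ (b ⟨0, hd⟩))
        = μ₀ • ρ (γ i)⁻¹ (b ⟨0, hd⟩)) ∧
    (∀ g : G, ∀ x ∈ Submodule.span F (Set.range fun i => ρ (γ i)⁻¹ (b ⟨0, hd⟩)),
        ρ g x ∈ Submodule.span F (Set.range fun i => ρ (γ i)⁻¹ (b ⟨0, hd⟩))) := by
  set e₀ : V := b ⟨0, hd⟩ with he₀
  set w : Fin r → V := fun i => ρ (γ i)⁻¹ e₀ with hw
  set W : Submodule F V := Submodule.span F (Set.range w) with hW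
  -- μ₀ ≠ 0
  have hb0ne : e₀ ≠ 0 := b.ne_zero _
  have comp : ∀ (a c : G) (x : V), ρ a (ρ c x) = ρ (a * c) x := by
    intro a c x; rw [map_mul]; rfl
  have cancel : ∀ (a : G) (x : V), ρ a⁻¹ (ρ a x) = x := by
    intro a x; rw [comp, inv_mul_cancel, map_one]; rfl
  have cancel' : ∀ (a : G) (x : V), ρ a (ρ a⁻¹ x) = x := by
    intro a x; rw [comp, mul_inv_cancel, map_one]; rfl
  have hμ0 : μ₀ ≠ 0 := by
    intro h
    apply hb0ne
    have h0 : ρ m e₀ = ρ m 0 := by rw [hb0, h, zero_smul, map_zero]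
    exact (ρ m).injective h0
  -- key: for all x, ρ m x - x ∈ span {e₀}
  have key : ∀ x : V, ρ m x - x ∈ Submodule.span F {e₀} := by
    intro x
    have hx : x ∈ Submodule.span F (Set.range b) := by
      rw [b.span_eq]; trivial
    induction hx using Submodule.span_induction with
    | mem y hy =>
      obtain ⟨i, rfl⟩ := hy
      by_cases hi : i = ⟨0, hd⟩
      · subst hi
        rw [← he₀, hb0]
        have : μ₀ • e₀ - e₀ = (μ₀ - 1) • e₀ := by rw [sub_smul, one_smul]
        rw [this]
        exact Submodule.smul_mem _ _ (Submodule.mem_span_singleton_self _)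
      · rw [hbi i hi, sub_self]; exact Submodule.zero_mem _
    | zero => simp
    | add y z _ _ hy hz =>
      have : ρ m (y + z) - (y + z) = (ρ m y - y) + (ρ m z - z) := by
        rw [map_add]; abel
      rw [this]; exact Submodule.add_mem _ hy hz
    | smul c y _ hy =>
      have : ρ m (c • y) - c • y = c • (ρ m y - y) := by
        rw [map_smul, smul_sub]
      rw [this]; exact Submodule.smul_mem _ _ hy
  -- ρ m⁻¹ version
  have keyinv : ∀ x : V, ρ m⁻¹ x - x ∈ Submodule.span F {e₀} := by
    intro x
    have h1 : ρ m (ρ m⁻¹ x) - ρ m⁻¹ x ∈ Submodule.span F {e₀} := key _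
    rw [cancel' m x] at h1
    have : ρ m⁻¹ x - x = -(x - ρ m⁻¹ x) := by abel
    rw [this]
    exact Submodule.neg_mem _ h1
  -- first statement
  have part1 : ∀ i : Fin r, ρ ((γ i)⁻¹ * m * γ i) (w i) = μ₀ • w i := by
    intro i
    have h1 : ρ ((γ i)⁻¹ * m * γ i) (w i)
        = ρ (γ i)⁻¹ (ρ m (ρ (γ i) (ρ (γ i)⁻¹ e₀))) := by
      simp only [w, comp]; congr 1; group
    rw [h1, cancel' (γ i) e₀, hb0, map_smul]
  refine ⟨part1, ?_⟩
  -- w i ∈ W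
  have hwmem : ∀ i, w i ∈ W := fun i => Submodule.subset_span ⟨i, rfl⟩
  -- generator (and its inverse) preserve W
  have hgenW : ∀ (i : Fin r) (n : G), (n = m ∨ n = m⁻¹) →
      ∀ x ∈ W, ρ ((γ i)⁻¹ * n * γ i) x ∈ W := by
    intro i n hn x hx
    have hsub : Submodule.span F {e₀} ≤ Submodule.span F {ρ (γ i) (w i)} := by
      apply Submodule.span_mono
      intro y hy
      rw [Set.mem_singleton_iff] at hy
      subst hy
      have : ρ (γ i) (w i) = e₀ := cancel' (γ i) e₀
      simp [this]
    have hdiff : ρ n (ρ (γ i) x) - ρ (γ i) x ∈ Submodule.span F {ρ (γ i) (w i)} := by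
      rcases hn with rfl | rfl
      · exact hsub (key _)
      · exact hsub (keyinv _)
    rw [Submodule.mem_span_singleton] at hdiff
    obtain ⟨c, hc⟩ := hdiff
    have heq : ρ ((γ i)⁻¹ * n * γ i) x = x + c • w i := by
      have h1 : ρ ((γ i)⁻¹ * n * γ i) x = ρ (γ i)⁻¹ (ρ n (ρ (γ i) x)) := by
        simp only [comp]; congr 1; group
      have h2 : ρ n (ρ (γ i) x) = ρ (γ i) x + c • ρ (γ i) (w i) := by
        rw [hc]; abel
      rw [h1, h2, map_add, map_smul, cancel (γ i) x, cancel (γ i) (w i)]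
    rw [heq]
    exact Submodule.add_mem _ hx (Submodule.smul_mem _ _ (hwmem i))
  -- closure induction with strengthened predicate
  intro g x hx
  suffices h : (∀ y ∈ W, ρ g y ∈ W) ∧ (∀ y ∈ W, ρ g⁻¹ y ∈ W) from h.1 x hx
  have hg : g ∈ Subgroup.closure (Set.range fun i => (γ i)⁻¹ * m * γ i) := by
    rw [hgen]; trivial
  induction hg using Subgroup.closure_induction with
  | mem s hs =>
    obtain ⟨i, rfl⟩ := hs
    constructor
    · exact hgenW i m (Or.inl rfl)
    · intro y hy
      have : ((γ i)⁻¹ * m * γ i)⁻¹ = (γ i)⁻¹ * m⁻¹ * γ i := by group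
      rw [this]
      exact hgenW i m⁻¹ (Or.inr rfl) y hy
  | one =>
    constructor <;> · intro y hy; simpa using hy
  | mul a c _ _ ha hc =>
    constructor
    · intro y hy
      rw [map_mul]
      exact ha.1 _ (hc.1 y hy)
    · intro y hy
      rw [mul_inv_rev, map_mul]
      exact hc.2 _ (ha.2 y hy)
  | inv a _ ha =>
    refine ⟨ha.2, ?_⟩
    simpa using ha.1
end

section
/- Let F be a field, G a group generated by conjugates of m, and ρ : G → GL(V) a KCH representation with dim V = d (ρ(m) diagonalizable, eigenvalue 1 of multiplicity d−1, other eigenvalue μ_0 ≠ 1). If W ⊆ V is a ρ-invariant subspace, then either ρ(g) restricts to the identity on W for every g ∈ G, or W contains the meridian subspace span{ρ(γ^{-1})e_1 : γ ∈ G}, where e_1 is the μ_0-eigenvector of ρ(m). -/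
/-- let `ρ : G → GL(V)` be a KCH representation (eigenbasis `b` of
`ρ(m)`, `ρ(m)(b 0) = μ₀ • b 0` with `μ₀ ≠ 1`, `ρ(m)(b i) = b i` for `i ≠ 0`), with
`G` generated by the conjugates `(γ i)⁻¹ * m * (γ i)`.  If `W` is a `ρ`-invariant
subspace, then either `ρ` restricts to the identity on `W`, or `W` contains the
meridian subspace `span {ρ((γ i)⁻¹)(b 0)}`. -/
theorem invariant_subspace_dichotomy {F : Type*} [Field F]
    {V : Type*} [AddCommGroup V] [Module F V]
    {G : Type*} [Group G] (ρ : G →* (V ≃ₗ[F] V)) (m : G)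
    {r : ℕ} (γ : Fin r → G)
    (hgen : Subgroup.closure (Set.range fun i => (γ i)⁻¹ * m * γ i) = ⊤)
    {d : ℕ} (hd : 0 < d) (b : Module.Basis (Fin d) F V) (μ₀ : F) (hμ : μ₀ ≠ 1)
    (hb0 : ρ m (b ⟨0, hd⟩) = μ₀ • b ⟨0, hd⟩)
    (hbi : ∀ i, i ≠ ⟨0, hd⟩ → ρ m (b i) = b i)
    (W : Submodule F V) (hW : ∀ g : G, ∀ x ∈ W, ρ g x ∈ W) :
    (∀ g : G, ∀ x ∈ W, ρ g x = x) ∨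
      Submodule.span F (Set.range fun i => ρ (γ i)⁻¹ (b ⟨0, hd⟩)) ≤ W := by
  set i0 : Fin d := ⟨0, hd⟩ with hi0
  have comp : ∀ (g h : G) (x : V), ρ g (ρ h x) = ρ (g * h) x := by
    intro g h x; rw [map_mul]; rfl
  -- key computation: (ρ m - id) x = ((μ₀ - 1) * coordinate of x at 0) • b i0
  have key : ∀ x : V, ρ m x - x = ((μ₀ - 1) * b.repr x i0) • b i0 := by
    intro x
    conv_lhs => rw [← b.sum_repr x]
    rw [map_sum, ← Finset.sum_sub_distrib]
    have : ∀ i : Fin d, ρ m (b.repr x i • b i) - b.repr x i • b i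
        = b.repr x i • (ρ m (b i) - b i) := by
      intro i; rw [map_smul, smul_sub]
    simp_rw [this]
    rw [Finset.sum_eq_single i0]
    · rw [hb0]
      rw [show μ₀ • b i0 - b i0 = (μ₀ - 1) • b i0 by rw [sub_smul, one_smul]]
      rw [smul_smul, mul_comm]
    · intro i _ hi
      rw [hbi i hi, sub_self, smul_zero]
    · intro h; exact absurd (Finset.mem_univ i0) h
  -- action of a conjugate generator
  have step : ∀ (j : Fin r) (w : V), ρ ((γ j)⁻¹ * m * γ j) w - w
      = ((μ₀ - 1) * b.repr (ρ (γ j) w) i0) • ρ (γ j)⁻¹ (b i0) := by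
    intro j w
    have h1 : ρ ((γ j)⁻¹ * m * γ j) w = ρ (γ j)⁻¹ (ρ m (ρ (γ j) w)) := by
      rw [comp, comp, mul_assoc]
    have h2 : w = ρ (γ j)⁻¹ (ρ (γ j) w) := by
      rw [comp, inv_mul_cancel, map_one]; rfl
    calc ρ ((γ j)⁻¹ * m * γ j) w - w
        = ρ (γ j)⁻¹ (ρ m (ρ (γ j) w)) - ρ (γ j)⁻¹ (ρ (γ j) w) := by
          rw [h1]; nth_rewrite 2 [h2]; rfl
      _ = ρ (γ j)⁻¹ (ρ m (ρ (γ j) w) - ρ (γ j) w) := (map_sub _ _ _).symm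
      _ = ρ (γ j)⁻¹ (((μ₀ - 1) * b.repr (ρ (γ j) w) i0) • b i0) := by rw [key]
      _ = ((μ₀ - 1) * b.repr (ρ (γ j) w) i0) • ρ (γ j)⁻¹ (b i0) := map_smul _ _ _
  by_cases hall : ∀ i : Fin r, ∀ x ∈ W, ρ ((γ i)⁻¹ * m * γ i) x = x
  · -- every generator is the identity on W, hence so is every element of G
    left
    have hsub : ∀ g ∈ Subgroup.closure (Set.range fun i => (γ i)⁻¹ * m * γ i),
        ∀ x ∈ W, ρ g x = x := by
      intro g hg
      induction hg using Subgroup.closure_induction with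
      | mem g hg => obtain ⟨i, rfl⟩ := hg; exact hall i
      | one => intro x _; rw [map_one]; rfl
      | mul a c _ _ iha ihc =>
          intro x hx
          rw [← comp, ihc x hx, iha x hx]
      | inv a _ iha =>
          intro x hx
          have h1 := iha (ρ a⁻¹ x) (hW a⁻¹ x hx)
          rw [comp, mul_inv_cancel, map_one] at h1
          exact h1.symm
    intro g
    exact hsub g (hgen ▸ Subgroup.mem_top g)
  · -- some generator moves some element of W
    right
    push_neg at hall
    obtain ⟨i, w, hwW, hne⟩ := hall
    have hdiff : ρ ((γ i)⁻¹ * m * γ i) w - w ∈ W :=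
      W.sub_mem (hW _ _ hwW) hwW
    rw [step] at hdiff
    have hc : (μ₀ - 1) * b.repr (ρ (γ i) w) i0 ≠ 0 := by
      intro h
      apply hne
      have h2 := step i w
      rw [h, zero_smul, sub_eq_zero] at h2
      exact h2
    have hui : ρ (γ i)⁻¹ (b i0) ∈ W := by
      have h3 := W.smul_mem ((μ₀ - 1) * b.repr (ρ (γ i) w) i0)⁻¹ hdiff
      rwa [smul_smul, inv_mul_cancel₀ hc, one_smul] at h3
    rw [Submodule.span_le]
    rintro _ ⟨j, rfl⟩
    by_contra hj
    -- consider w' = ρ((γ j)⁻¹ * γ i) (ρ (γ i)⁻¹ (b i0)) ∈ W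
    set w' : V := ρ ((γ j)⁻¹ * γ i) (ρ (γ i)⁻¹ (b i0)) with hw'
    have hw'W : w' ∈ W := hW _ _ hui
    have hcoord : ρ (γ j) w' = b i0 := by
      rw [hw', comp, comp]
      have : γ j * ((γ j)⁻¹ * γ i) * (γ i)⁻¹ = 1 := by group
      rw [this, map_one]; rfl
    have hdiff' : ((μ₀ - 1) * b.repr (ρ (γ j) w') i0) • ρ (γ j)⁻¹ (b i0) ∈ W := by
      rw [← step]
      exact W.sub_mem (hW _ _ hw'W) hw'W
    have hc' : (μ₀ - 1) * b.repr (ρ (γ j) w') i0 ≠ 0 := by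
      rw [hcoord, Module.Basis.repr_self, Finsupp.single_eq_same, mul_one]
      exact sub_ne_zero_of_ne hμ
    apply hj
    have h4 := W.smul_mem ((μ₀ - 1) * b.repr (ρ (γ j) w') i0)⁻¹ hdiff'
    rwa [smul_smul, inv_mul_cancel₀ hc', one_smul] at h4
end

section
/- Let F be a field and ρ : G → GL(V) a KCH representation (ρ(m) diagonalizable with eigenvalue 1 of multiplicity dim V − 1 and remaining eigenvalue μ_0 ≠ 1). If W ⊂ V is a subspace on which ρ acts as the identity, then the quotient representation ρ̄ : G → GL(V/W) is again a KCH representation: ρ̄(m) is diagonalizable with eigenvalue 1 of multiplicity dim(V/W) − 1 and remaining eigenvalue μ_0. -/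
/-- let `ρ : G → GL(V)` be a KCH representation (eigenbasis `b` of
`ρ(m)` with `ρ(m)(b 0) = μ₀ • b 0`, `μ₀ ≠ 1`, and `ρ(m)(b i) = b i` for `i ≠ 0`).
If `W` is a subspace on which `ρ` acts as the identity, then the induced map of
`ρ(m)` on `V ⧸ W` is again diagonalizable with eigenvalue 1 of multiplicity
`dim (V ⧸ W) - 1` and remaining eigenvalue `μ₀`: there is an eigenbasis `b'` of
the quotient with `ρ̄(m)(b' 0) = μ₀ • b' 0` and `ρ̄(m)(b' i) = b' i` for `i ≠ 0`. -/
theorem quotient_KCH {F : Type*} [Field F]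
    {V : Type*} [AddCommGroup V] [Module F V]
    {G : Type*} [Group G] (ρ : G →* (V ≃ₗ[F] V)) (m : G)
    {d : ℕ} (hd : 0 < d) (b : Module.Basis (Fin d) F V) (μ₀ : F) (hμ : μ₀ ≠ 1)
    (hb0 : ρ m (b ⟨0, hd⟩) = μ₀ • b ⟨0, hd⟩)
    (hbi : ∀ i, i ≠ ⟨0, hd⟩ → ρ m (b i) = b i)
    (W : Submodule F V) (hfix : ∀ g : G, ∀ x ∈ W, ρ g x = x) :
    ∃ (d' : ℕ) (hd' : 0 < d') (b' : Module.Basis (Fin d') F (V ⧸ W)),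
      W.mapQ W (ρ m : V →ₗ[F] V)
          (fun x hx => Submodule.mem_comap.mpr (by simpa [hfix m x hx] using hx))
          (b' ⟨0, hd'⟩) = μ₀ • b' ⟨0, hd'⟩ ∧
      ∀ i, i ≠ ⟨0, hd'⟩ →
        W.mapQ W (ρ m : V →ₗ[F] V)
            (fun x hx => Submodule.mem_comap.mpr (by simpa [hfix m x hx] using hx))
            (b' i) = b' i := by
  classical
  set i0 : Fin d := ⟨0, hd⟩
  set v0 : V := b i0
  -- formula for ρ m
  have key : (ρ m : V →ₗ[F] V)
      = LinearMap.id + (μ₀ - 1) • ((b.coord i0).smulRight v0) := by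
    apply b.ext
    intro i
    by_cases h : i = i0
    · subst h
      simp [v0, hb0, Module.Basis.coord, sub_smul]
    · simp [hbi i h, Module.Basis.coord, Module.Basis.repr_self_apply, h]
  set T : (V ⧸ W) →ₗ[F] (V ⧸ W) :=
    W.mapQ W (ρ m : V →ₗ[F] V)
      (fun x hx => Submodule.mem_comap.mpr (by simpa [hfix m x hx] using hx))
  have hT : ∀ v : V, T (Submodule.Quotient.mk v)
      = Submodule.Quotient.mk v
        + ((μ₀ - 1) * b.coord i0 v) • Submodule.Quotient.mk v0 := by
    intro v
    simp only [T, Submodule.mapQ_apply, key]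
    simp [mul_smul]
  have hv0W : v0 ∉ W := by
    intro h
    have h1 := hfix m v0 h
    rw [hb0] at h1
    have h2 : (μ₀ - 1) • v0 = 0 := by rw [sub_smul, one_smul, h1, sub_self]
    have hne : v0 ≠ 0 := b.ne_zero i0
    rcases smul_eq_zero.mp h2 with h3 | h3
    · exact hμ (sub_eq_zero.mp h3)
    · exact hne h3
  set y : V ⧸ W := Submodule.Quotient.mk v0
  have hy : y ≠ 0 := by
    simpa [y, Submodule.Quotient.mk_eq_zero] using hv0W
  have hTy : T y = μ₀ • y := by
    rw [hT]
    simp only [y, v0, Module.Basis.coord_apply, Module.Basis.repr_self, Finsupp.single_eq_same]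
    module
  set N : Submodule F (V ⧸ W) := LinearMap.ker (T - LinearMap.id)
  have hN : ∀ z ∈ N, T z = z := by
    intro z hz
    have := LinearMap.mem_ker.mp hz
    simpa [sub_eq_zero] using this
  haveI : FiniteDimensional F V := Module.Finite.of_basis b
  haveI : FiniteDimensional F N := inferInstance
  set n := Module.finrank F N
  set bN : Module.Basis (Fin n) F N := Module.finBasis F N
  have hli : ∀ (c : F) (x : V ⧸ W), x ∈ N → c • y + x = 0 → c = 0 := by
    intro c x hx hcx
    have h1 : T (c • y + x) = 0 := by rw [hcx]; simp
    rw [map_add, map_smul, hTy, hN x hx, smul_smul] at h1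
    have h2 : (c * μ₀) • y = c • y := add_right_cancel (h1.trans hcx.symm)
    have h3 : (c * μ₀ - c) • y = 0 := by rw [sub_smul, h2, sub_self]
    rcases smul_eq_zero.mp h3 with h4 | h4
    · have h5 : c * (μ₀ - 1) = 0 := by linear_combination h4
      rcases mul_eq_zero.mp h5 with h6 | h6
      · exact h6
      · exact absurd (sub_eq_zero.mp h6) hμ
    · exact absurd h4 hy
  have hsp : ∀ z : V ⧸ W, ∃ c : F, z + c • y ∈ N := by
    intro z
    obtain ⟨v, rfl⟩ := Submodule.Quotient.mk_surjective W z
    refine ⟨-(b.coord i0 v), ?_⟩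
    have h1 : T (Submodule.Quotient.mk v + (-(b.coord i0 v)) • y)
        = Submodule.Quotient.mk v + (-(b.coord i0 v)) • y := by
      rw [map_add, map_smul, hTy, hT, smul_smul]
      module
    simpa [N, LinearMap.mem_ker, sub_eq_zero] using h1
  set b' : Module.Basis (Fin (n + 1)) F (V ⧸ W) := Module.Basis.mkFinCons y bN hli hsp
  refine ⟨n + 1, Nat.succ_pos n, b', ?_, ?_⟩
  · have h0 : b' ⟨0, Nat.succ_pos n⟩ = y := by
      simp [b', Module.Basis.coe_mkFinCons]
    rw [h0, hTy]
  · intro i hi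
    have hb'i : b' i ∈ N := by
      rcases Fin.eq_succ_of_ne_zero (by simpa using hi : i ≠ 0) with ⟨j, rfl⟩
      simp [b', Module.Basis.coe_mkFinCons]
    exact hN _ hb'i
end

section
/- Let A_n be the free Z-algebra on a_{ij} (i ≠ j), and define the involutive anti-automorphism x ↦ x̄ by a_{ij}̄ = a_{ji} and (xy)̄ = ȳx̄, extended Z-linearly. Then for every braid B ∈ B_n, the matrix Φ_B^R equals the transpose of the entrywise bar of Φ_B^L. -/
/- We realize the braid group `B_{n+1}` (included in `B_{n+2}` so that the last
strand does not interact) by words in the standard generators `σ_k` and their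
inverses: a letter is a pair `(k, s)` with `k : Fin n` (the generator `σ_{k+1}`
crossing strands `k` and `k+1` of `Fin (n+2)`, never the extra last strand) and
`s : Bool` recording the sign of the crossing. -/

/-- The automorphism `φ` associated to a single braid-word letter. -/
noncomputable def phiLetter {n : ℕ} (g : Fin n × Bool) :
    BraidAlg (n + 2) →ₐ[ℤ] BraidAlg (n + 2) :=
  let k : Fin (n + 2) := ⟨g.1, by omega⟩
  let k1 : Fin (n + 2) := ⟨g.1 + 1, by omega⟩
  have hk : k ≠ k1 := Fin.ne_of_val_ne (Nat.lt_succ_self _).ne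
  if g.2 then phiSigma k k1 hk else phiSigmaInv k k1 hk

/-- The homomorphism `φ_B` for a braid word `B` (so `φ_{BB'} = φ_B ∘ φ_{B'}`). -/
noncomputable def phiWord {n : ℕ} : List (Fin n × Bool) →
    (BraidAlg (n + 2) →ₐ[ℤ] BraidAlg (n + 2))
  | [] => AlgHom.id ℤ _
  | g :: w => (phiLetter g).comp (phiWord w)

/-- The inverse braid word. -/
def wordInv {n : ℕ} (w : List (Fin n × Bool)) : List (Fin n × Bool) :=
  (w.map (fun g => (g.1, !g.2))).reverse

/-- The generator `a_{i,n+1}` involving the extra strand. -/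
noncomputable def aL {n : ℕ} (i : Fin (n + 1)) : BraidAlg (n + 2) :=
  agen i.castSucc (Fin.last (n + 1)) (Fin.castSucc_lt_last i).ne

/-- The generator `a_{n+1,i}` involving the extra strand. -/
noncomputable def aR {n : ℕ} (i : Fin (n + 1)) : BraidAlg (n + 2) :=
  agen (Fin.last (n + 1)) i.castSucc (Fin.castSucc_lt_last i).ne'

/-- `L` is the matrix `Φ_B^L` of the braid word `w`:
`φ_B(a_{i,n+1}) = Σ_j L_{ij} a_{j,n+1}`. -/
def IsPhiL {n : ℕ} (w : List (Fin n × Bool))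
    (L : Matrix (Fin (n + 1)) (Fin (n + 1)) (BraidAlg (n + 2))) : Prop :=
  ∀ i, phiWord w (aL i) = ∑ j, L i j * aL j

/-- `R` is the matrix `Φ_B^R` of the braid word `w`:
`φ_B(a_{n+1,i}) = Σ_j a_{n+1,j} R_{ji}`. -/
def IsPhiR {n : ℕ} (w : List (Fin n × Bool))
    (R : Matrix (Fin (n + 1)) (Fin (n + 1)) (BraidAlg (n + 2))) : Prop :=
  ∀ i, phiWord w (aR i) = ∑ j, aR j * R j i

/-- The bar involution of `A_N` as an algebra map to the opposite algebra:
`a_{ij} ↦ a_{ji}`, `(xy)‾ = ȳ x̄`. -/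
noncomputable def barMap {n : ℕ} : BraidAlg n →ₐ[ℤ] (BraidAlg n)ᵐᵒᵖ :=
  FreeAlgebra.lift ℤ (fun p => MulOpposite.op (agen p.1.2 p.1.1 p.2.symm))

open MulOpposite in
lemma barMap_agen {n : ℕ} (i j : Fin n) (h : i ≠ j) :
    barMap (agen i j h) = op (agen j i h.symm) := by
  simp [barMap, agen, FreeAlgebra.lift_ι_apply]

open MulOpposite in
lemma bar_phiSigmaAux {n : ℕ} (k k1 : Fin n) (hk : k ≠ k1) (p : BraidAlgGen n) :
    barMap (phiSigmaAux k k1 hk p)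
      = op (phiSigmaAux k k1 hk ⟨(p.1.2, p.1.1), p.2.symm⟩) := by
  obtain ⟨⟨i, j⟩, hij⟩ := p
  have hij' : i ≠ j := hij
  by_cases hik : i = k <;> by_cases hik1 : i = k1 <;> by_cases hjk : j = k <;>
      by_cases hjk1 : j = k1 <;>
    (subst_vars;
     simp_all only []
     <;> simp_all [phiSigmaAux, hk.symm,
           map_sub, map_neg, map_mul, barMap, agen, FreeAlgebra.lift_ι_apply,
           ← op_mul, ← op_sub, ← op_neg, op_inj])

open MulOpposite in
lemma bar_phiSigmaInvAux {n : ℕ} (k k1 : Fin n) (hk : k ≠ k1) (p : BraidAlgGen n) :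
    barMap (phiSigmaInvAux k k1 hk p)
      = op (phiSigmaInvAux k k1 hk ⟨(p.1.2, p.1.1), p.2.symm⟩) := by
  obtain ⟨⟨i, j⟩, hij⟩ := p
  have hij' : i ≠ j := hij
  by_cases hik : i = k <;> by_cases hik1 : i = k1 <;> by_cases hjk : j = k <;>
      by_cases hjk1 : j = k1 <;>
    (subst_vars;
     simp_all only []
     <;> simp_all [phiSigmaInvAux, hk.symm,
           map_sub, map_neg, map_mul, barMap, agen, FreeAlgebra.lift_ι_apply,
           ← op_mul, ← op_sub, ← op_neg, op_inj])

open MulOpposite in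
lemma bar_phiLetter {n : ℕ} (g : Fin n × Bool) :
    barMap.comp (phiLetter g) = (AlgHom.op (phiLetter g)).comp barMap := by
  apply FreeAlgebra.hom_ext
  funext p
  simp only [Function.comp_apply, AlgHom.coe_comp, AlgHom.op_apply_apply]
  unfold phiLetter
  have hbp : (barMap (FreeAlgebra.ι ℤ p)).unop = FreeAlgebra.ι ℤ
      (⟨(p.1.2, p.1.1), p.2.symm⟩ : BraidAlgGen (n + 2)) := by
    simp [barMap, agen, FreeAlgebra.lift_ι_apply]
  cases g.2 <;>
    simp only [if_true, if_false, Bool.false_eq_true, hbp, phiSigma, phiSigmaInv,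
      FreeAlgebra.lift_ι_apply]
  · exact bar_phiSigmaInvAux _ _ _ p
  · exact bar_phiSigmaAux _ _ _ p

open MulOpposite in
lemma bar_phiWord {n : ℕ} (w : List (Fin n × Bool)) (x : BraidAlg (n + 2)) :
    barMap (phiWord w x) = op (phiWord w ((barMap x).unop)) := by
  induction w generalizing x with
  | nil => simp [phiWord]
  | cons g w ih =>
    have h1 := AlgHom.congr_fun (bar_phiLetter g) (phiWord w x)
    simp only [AlgHom.coe_comp, Function.comp_apply, AlgHom.op_apply_apply] at h1
    simp only [phiWord, AlgHom.coe_comp, Function.comp_apply, h1, ih, unop_op]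

/-- The generator index of `aR j`. -/
def aRGen {n : ℕ} (j : Fin (n + 1)) : BraidAlgGen (n + 2) :=
  ⟨(Fin.last (n + 1), j.castSucc), (Fin.castSucc_lt_last j).ne'⟩

lemma aRGen_injective {n : ℕ} : Function.Injective (aRGen (n := n)) := by
  intro a b h
  simpa [aRGen, Fin.castSucc_inj] using congrArg (fun q => q.1.2) h

lemma aR_mul_sum_eq_zero {n : ℕ} (x : Fin (n + 1) → BraidAlg (n + 2))
    (h : ∑ j, aR j * x j = 0) : ∀ j, x j = 0 := by
  classical
  set e := FreeAlgebra.equivMonoidAlgebraFreeMonoid (R := ℤ) (X := BraidAlgGen (n + 2))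
  have he : ∀ j, e (aR j) = MonoidAlgebra.single (FreeMonoid.of (aRGen j)) (1 : ℤ) := by
    intro j
    show (FreeAlgebra.lift ℤ _) (FreeAlgebra.ι ℤ _) = _
    rw [FreeAlgebra.lift_ι_apply]
    rfl
  have h0 : ∑ j, MonoidAlgebra.single (FreeMonoid.of (aRGen j)) (1 : ℤ) * e (x j) = 0 := by
    have := congrArg e h
    simpa [map_sum, map_mul, he] using this
  intro j0
  have hz : e (x j0) = 0 := by
    ext wd
    have := congrArg (fun f : MonoidAlgebra ℤ (FreeMonoid (BraidAlgGen (n + 2))) =>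
      f.coeff (FreeMonoid.of (aRGen j0) * wd)) h0
    rw [MonoidAlgebra.coeff_sum, Finsupp.coe_finset_sum] at this
    simp only [Finset.sum_apply] at this
    rw [Finset.sum_eq_single j0] at this
    · rw [MonoidAlgebra.coeff_single_mul_eq_mul_coeff _ (fun a _ => mul_left_cancel_iff)] at this
      simpa using this
    · intro b _ hb
      refine MonoidAlgebra.single_mul_apply_of_not_exists_mul _ _ ?_
      rintro ⟨d, hd⟩
      have := congrArg FreeMonoid.toList hd
      simp only [FreeMonoid.toList_of_mul] at this
      exact hb (aRGen_injective (List.head_eq_of_cons_eq this).symm)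
    · intro hj0; exact absurd (Finset.mem_univ j0) hj0
  have := congrArg e.symm hz
  simpa using this

/-- for every braid word, `Φ_B^R` is the transpose of the entrywise
bar of `Φ_B^L`. -/
theorem phiR_eq_bar_transpose_phiL {n : ℕ}
    (w : List (Fin n × Bool)) (L R : Matrix (Fin (n + 1)) (Fin (n + 1)) (BraidAlg (n + 2)))
    (hL : IsPhiL w L) (hR : IsPhiR w R) :
    ∀ i j, R i j = (barMap (L j i)).unop := by
  intro i j
  -- fix the column index `j`
  have hbarL : barMap (aL j) = MulOpposite.op (aR j) := by
    simp [aL, aR, barMap_agen]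
  have key : phiWord w (aR j) = ∑ m, aR m * (barMap (L j m)).unop := by
    have h1 : phiWord w (aR j) = (barMap (phiWord w (aL j))).unop := by
      rw [bar_phiWord, hbarL]; simp
    have hbarL' : ∀ m : Fin (n + 1), (barMap (aL m)).unop = aR m := fun m => by
      simp [aL, aR, barMap_agen]
    rw [h1, hL j, map_sum]
    simp [map_mul, hbarL']
  have hsum : ∑ m, aR m * (R m j - (barMap (L j m)).unop) = 0 := by
    simp only [mul_sub, Finset.sum_sub_distrib]
    rw [← hR j, ← key, sub_self]
  exact sub_eq_zero.mp (aR_mul_sum_eq_zero _ hsum i)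
end

section
/- Let F be a field, and let E be an r×r matrix over F whose top-left r_1×r_1 block is E^{(1)}, whose bottom-right (r−r_1)×(r−r_1) block together with the first row and column forms E^{(2)}-type data, and whose off-diagonal blocks are rank-one: E_{ij} = (1−μ_0)^{-1} a_i b_j for i ≤ r_1 < j and E_{ij} = (1−μ_0)^{-1} c_i d_j for j ≤ r_1 < i, where a_i = E^{(1)}_{i1}-type column entries and b_j row entries. If one can choose d_1 linearly independent columns among the first r_1 columns of E (including the first), and d_2 − 1 columns among the last r − r_1 columns that together with the first column form an independent set, then the union of these d_1 + d_2 − 1 columns is linearly independent; hence rank E ≥ d_1 + d_2 − 1. -/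
/-- block independence of columns of the connect-sum matrix.  Let `E`
be an `r × r` matrix over a field `F` with `E 0 0 = 1 - μ₀` (`μ₀ ≠ 1`) whose
off-diagonal blocks (rows `< r₁` against columns `≥ r₁`, and rows `≥ r₁` against
columns `< r₁`) are rank one through the first row and column:
`E i j = (1-μ₀)⁻¹ · (E i 0) · (E 0 j)` there.  If `s` is a set of columns among the
first `r₁` containing column `0` whose restrictions to the first `r₁` rows are
linearly independent, and `t` is a set of columns among the last `r - r₁` such that
the restrictions of the columns `{0} ∪ t` to the rows `{0} ∪ {i : i ≥ r₁}` are
linearly independent, then the full columns indexed by `s ∪ t` are linearly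
independent; hence `rank E ≥ s.card + t.card (= d₁ + d₂ - 1)`. -/
theorem connect_sum_columns_independent {F : Type*} [Field F]
    {r r₁ : ℕ} [NeZero r] (hr₁ : r₁ ≤ r) (hr₁pos : 0 < r₁)
    (E : Matrix (Fin r) (Fin r) F) (μ₀ : F) (hμ : μ₀ ≠ 1)
    (hdiag : E 0 0 = 1 - μ₀)
    (htop : ∀ i j : Fin r, (i : ℕ) < r₁ → r₁ ≤ (j : ℕ) →
      E i j = (1 - μ₀)⁻¹ * E i 0 * E 0 j)
    (hbot : ∀ i j : Fin r, r₁ ≤ (i : ℕ) → (j : ℕ) < r₁ →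
      E i j = (1 - μ₀)⁻¹ * E i 0 * E 0 j)
    (s t : Finset (Fin r))
    (hs : ∀ j ∈ s, (j : ℕ) < r₁) (h0s : (0 : Fin r) ∈ s)
    (ht : ∀ j ∈ t, r₁ ≤ (j : ℕ))
    (hsInd : LinearIndependent F
      (fun j : ↥s => fun i : {i : Fin r // (i : ℕ) < r₁} => E i.1 j.1))
    (htInd : LinearIndependent F
      (fun j : ↥(insert (0 : Fin r) t) =>
        fun i : {i : Fin r // i = 0 ∨ r₁ ≤ (i : ℕ)} => E i.1 j.1)) :
    LinearIndependent F (fun j : ↥(s ∪ t) => fun i : Fin r => E i j.1) ∧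
      s.card + t.card ≤ E.rank := by
  classical
  have hst : Disjoint s t := by
    rw [Finset.disjoint_left]
    intro j hjs hjt
    exact absurd (ht j hjt) (not_le.mpr (hs j hjs))
  have h0t : (0 : Fin r) ∉ t := by
    intro h
    have := ht 0 h
    simp only [Fin.val_zero] at this
    omega
  have hInd : LinearIndependent F (fun j : ↥(s ∪ t) => fun i : Fin r => E i j.1) := by
    rw [Fintype.linearIndependent_iff]
    intro g hg
    set c : Fin r → F := fun j => if h : j ∈ s ∪ t then g ⟨j, h⟩ else 0 with hc
    have hrow : ∀ i : Fin r, ∑ j ∈ s ∪ t, c j * E i j = 0 := by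
      intro i
      have h1 := congrFun hg i
      simp only [Finset.sum_apply, Pi.smul_apply, smul_eq_mul, Pi.zero_apply] at h1
      rw [← h1, ← Finset.sum_coe_sort (s ∪ t) (fun j => c j * E i j)]
      refine Finset.sum_congr rfl ?_
      intro j _
      obtain ⟨j, hj⟩ := j
      simp only [hc, dif_pos hj]
    set lam : F := (1 - μ₀)⁻¹ * ∑ j ∈ t, c j * E 0 j with hlam
    have stepA : ∀ j ∈ s, c j + (if j = 0 then lam else 0) = 0 := by
      have key := Fintype.linearIndependent_iff.mp hsInd
        (fun j : ↥s => c j.1 + if j.1 = 0 then lam else 0) ?_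
      · intro j hj; exact key ⟨j, hj⟩
      · funext i
        simp only [Finset.sum_apply, Pi.smul_apply, smul_eq_mul, Pi.zero_apply]
        rw [Finset.sum_coe_sort s
          (fun j => (c j + if j = 0 then lam else 0) * E i.1 j)]
        have ht_sum : ∑ j ∈ t, c j * E i.1 j = lam * E i.1 0 := by
          calc ∑ j ∈ t, c j * E i.1 j
              = ∑ j ∈ t, (1 - μ₀)⁻¹ * (c j * E 0 j) * E i.1 0 :=
                Finset.sum_congr rfl (fun j hj => by
                  rw [htop i.1 j i.2 (ht j hj)]; ring)
            _ = lam * E i.1 0 := by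
                rw [hlam, ← Finset.sum_mul, ← Finset.mul_sum]
        have h := hrow i.1
        rw [Finset.sum_union hst, ht_sum] at h
        calc ∑ j ∈ s, (c j + if j = 0 then lam else 0) * E i.1 j
            = ∑ j ∈ s, (c j * E i.1 j + if j = 0 then lam * E i.1 j else 0) := by
              refine Finset.sum_congr rfl (fun j _ => ?_)
              by_cases hj0 : j = 0 <;> simp [hj0] <;> ring
          _ = (∑ j ∈ s, c j * E i.1 j) + lam * E i.1 0 := by
              rw [Finset.sum_add_distrib, Finset.sum_ite_eq' s 0
                (fun j => lam * E i.1 j), if_pos h0s]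
          _ = 0 := h
    have hcs : ∀ j ∈ s, j ≠ 0 → c j = 0 := by
      intro j hj hne
      have := stepA j hj
      simpa [hne] using this
    have stepB : ∀ j ∈ insert (0 : Fin r) t, c j = 0 := by
      have key := Fintype.linearIndependent_iff.mp htInd
        (fun j : ↥(insert (0 : Fin r) t) => c j.1) ?_
      · intro j hj; exact key ⟨j, hj⟩
      · funext i
        simp only [Finset.sum_apply, Pi.smul_apply, smul_eq_mul, Pi.zero_apply]
        rw [Finset.sum_coe_sort (insert (0 : Fin r) t) (fun j => c j * E i.1 j)]
        rw [Finset.sum_insert h0t]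
        have h := hrow i.1
        rw [Finset.sum_union hst] at h
        have hsum : ∑ j ∈ s, c j * E i.1 j = c 0 * E i.1 0 := by
          rw [Finset.sum_eq_single_of_mem 0 h0s]
          intro j hj hne
          rw [hcs j hj hne, zero_mul]
        rw [hsum] at h
        exact h
    intro j
    obtain ⟨j, hj⟩ := j
    have hcj : c j = 0 := by
      rcases Finset.mem_union.mp hj with hj' | hj'
      · by_cases h0 : j = 0
        · rw [h0]; exact stepB 0 (Finset.mem_insert_self _ _)
        · exact hcs _ hj' h0
      · exact stepB _ (Finset.mem_insert_of_mem hj')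
    simp only [hc, dif_pos hj] at hcj
    exact hcj
  refine ⟨hInd, ?_⟩
  have cols_mem : ∀ j : Fin r,
      (fun i => E i j) ∈ LinearMap.range E.mulVecLin := by
    intro j
    exact ⟨Pi.single j 1, by
      rw [Matrix.mulVecLin_apply, Matrix.mulVec_single_one]; rfl⟩
  set w : ↥(s ∪ t) → LinearMap.range E.mulVecLin :=
    fun j => ⟨fun i => E i j.1, cols_mem j.1⟩ with hw
  have hwInd : LinearIndependent F w :=
    LinearIndependent.of_comp (LinearMap.range E.mulVecLin).subtype hInd
  have hcard := hwInd.fintype_card_le_finrank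
  rw [Fintype.card_coe, Finset.card_union_of_disjoint hst] at hcard
  exact hcard
end
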